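/- Let N ≥ 1, let S ⊆ ℝ^N be compact, let h ∈ B_S, let D_1, …, D_M ⊆ ℝ^N be bounded measurable sets each with nonempty interior, and let ω_1, …, ω_M ∈ (0,1] with ω_1 + ⋯ + ω_M = 1. Define T_h f = Σ_{m=1}^M ω_m P_S(f + χ_{D_m}(h − f)), and the sequence f_0 = Σ_{m=1}^M P_S(χ_{D_m} h), f_{k+1} = T_h f_k for k ≥ 0. Then f_k converges strongly to h in L²(ℝ^N), i.e., ‖f_k − h‖ → 0 as k → ∞. -/

import Mathlib

/-!
The error `e_k = f_k - h` stays in `B_S` and satisfies `e_{k+1} = A e_k` with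
`A = ∑ ω_m P_S (1 - χ_{D_m}) P_S`. Each summand compresses an orthogonal projection, so `A` is
symmetric and firmly nonexpansive, `‖A x‖² ≤ re ⟪A x, x⟫`. Hence `a_n = re ⟪Aⁿ e, e⟫` is
nonincreasing and nonnegative, and `‖Aᵏ e - Aᵐ e‖² = a_{2k} - 2 a_{k+m} + a_{2m}` makes `Aⁿ e`
Cauchy. Its limit `g` is fixed by `A`, hence by every summand, so `χ_{D_m} g = 0`. Being
bandlimited to a bounded set, `g` is along every line the restriction of an entire function, and
vanishing on the open set `interior D_m` forces `g = 0`.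
-/

open MeasureTheory FourierTransform Filter

noncomputable section

/-- The Hilbert space `L²(ℝᴺ; ℂ)` of square-integrable functions on `ℝᴺ`. -/
abbrev L2Space (N : ℕ) : Type :=
  Lp ℂ 2 (volume : Measure (EuclideanSpace ℝ (Fin N)))

/-- `f ∈ L²(ℝᴺ)` is bandlimited to `S`: its Fourier transform vanishes (a.e.) outside `S`;
equivalently, `f` agrees a.e. with the inverse Fourier transform of an integrable function `F`
vanishing outside `S`. -/
def IsBandlimited {N : ℕ} (S : Set (EuclideanSpace ℝ (Fin N))) (f : L2Space N) : Prop :=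
  ∃ F : EuclideanSpace ℝ (Fin N) → ℂ,
    Integrable F ∧ (∀ k, k ∉ S → F k = 0) ∧
      (f : EuclideanSpace ℝ (Fin N) → ℂ) =ᵐ[volume] 𝓕⁻ F

/-- Multiplication of `f ∈ L²` by the indicator function `χ_D`, as an element of `L²`. -/
def chiMul {N : ℕ} {D : Set (EuclideanSpace ℝ (Fin N))} (hD : MeasurableSet D)
    (f : L2Space N) : L2Space N :=
  ((Lp.memLp f).indicator hD).toLp (D.indicator f)

/-- The orthogonal projection of `L²(ℝᴺ)` onto a closed subspace `K`. -/
def projOf {N : ℕ} (K : Submodule ℂ (L2Space N)) (hK : IsClosed (K : Set (L2Space N))) :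
    L2Space N → L2Space N :=
  haveI : CompleteSpace K := hK.completeSpace_coe
  fun f => (K.orthogonalProjectionOnto f : L2Space N)

/-- The operator `T_h^{(D)} f = P_S (f + χ_D (h − f))` (single region). -/
def Tsingle {N : ℕ} (K : Submodule ℂ (L2Space N)) (hK : IsClosed (K : Set (L2Space N)))
    {D : Set (EuclideanSpace ℝ (Fin N))} (hD : MeasurableSet D)
    (h f : L2Space N) : L2Space N :=
  projOf K hK (f + chiMul hD (h - f))

/-- The operator `T_h f = ∑ m, ω m • P_S (f + χ_{D m} (h − f))` (multiple weighted regions). -/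
def Tmulti {N : ℕ} (K : Submodule ℂ (L2Space N)) (hK : IsClosed (K : Set (L2Space N)))
    {M : ℕ} {D : Fin M → Set (EuclideanSpace ℝ (Fin N))} (hD : ∀ m, MeasurableSet (D m))
    (ω : Fin M → ℝ) (h f : L2Space N) : L2Space N :=
  ∑ m, ω m • projOf K hK (f + chiMul (hD m) (h - f))

open scoped InnerProductSpace Topology

section InnerProductSpace

variable {𝕜 E : Type*} [RCLike 𝕜] [NormedAddCommGroup E] [InnerProductSpace 𝕜 E]

open RCLike

lemma cauchySeq_of_re_inner_eq {u : ℕ → E} {a : ℕ → ℝ} {L : ℝ} (ha : Tendsto a atTop (𝓝 L))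
    (hu : ∀ k m, re ⟪u k, u m⟫_𝕜 = a (k + m)) : CauchySeq u := by
  have dist_eq : ∀ p : ℕ × ℕ,
      dist (u p.1) (u p.2) = √(a (p.1 + p.1) - 2 * a (p.1 + p.2) + a (p.2 + p.2)) := fun p => by
    rw [dist_eq_norm, ← hu, ← hu, ← hu, ← norm_sq_eq_re_inner, ← norm_sq_eq_re_inner,
      ← norm_sub_sq, Real.sqrt_sq (norm_nonneg _)]
  have lim_comp : ∀ φ : ℕ × ℕ → ℕ, (∀ p, min p.1 p.2 ≤ φ p) → Tendsto (a ∘ φ) atTop (𝓝 L) :=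
    fun φ hφ => ha.comp <| tendsto_atTop_atTop.2 fun b =>
      ⟨(b, b), fun p hp => le_trans (le_min hp.1 hp.2) (hφ p)⟩
  have h := ((lim_comp (fun p => p.1 + p.1) fun p => by omega).sub
    ((lim_comp (fun p => p.1 + p.2) fun p => by omega).const_mul 2)).add
    (lim_comp (fun p => p.2 + p.2) fun p => by omega)
  have h0 := (Real.continuous_sqrt.tendsto _).comp h
  rw [show L - 2 * L + L = 0 by ring, Real.sqrt_zero] at h0
  rw [cauchySeq_iff_tendsto_dist_atTop_0, funext dist_eq]
  exact h0

namespace LinearMap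

/-- Firm nonexpansiveness `‖T x - T y‖² ≤ re ⟪T x - T y, x - y⟫`, written for a linear map. -/
def IsFirmlyNonexpansive (T : E →ₗ[𝕜] E) : Prop :=
  ∀ x, ‖T x‖ ^ 2 ≤ re ⟪T x, x⟫_𝕜

lemma re_inner_sum_smul_apply {ι : Type*} (s : Finset ι) (ω : ι → ℝ) (R : ι → E →ₗ[𝕜] E)
    (x : E) : re ⟪(∑ i ∈ s, (ω i : 𝕜) • R i) x, x⟫_𝕜 = ∑ i ∈ s, ω i * re ⟪R i x, x⟫_𝕜 := by
  simp [sum_inner, inner_smul_left]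

namespace IsFirmlyNonexpansive

variable {T : E →ₗ[𝕜] E}

lemma norm_apply_le (hT : T.IsFirmlyNonexpansive) (x : E) : ‖T x‖ ≤ ‖x‖ := by
  have h := (hT x).trans (re_inner_le_norm (T x) x)
  nlinarith [norm_nonneg (T x), norm_nonneg x]

protected lemma continuous (hT : T.IsFirmlyNonexpansive) : Continuous T :=
  AddMonoidHomClass.continuous_of_bound T 1 fun x => by simpa using hT.norm_apply_le x

lemma apply_eq_of_norm_sq_le (hT : T.IsFirmlyNonexpansive) {x : E}
    (hx : ‖x‖ ^ 2 ≤ re ⟪T x, x⟫_𝕜) : T x = x := by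
  have h : ‖T x - x‖ ^ 2 ≤ ‖x‖ ^ 2 - re ⟪T x, x⟫_𝕜 := by
    rw [norm_sub_sq (𝕜 := 𝕜)]
    linarith [hT x]
  rw [← sub_eq_zero, ← norm_eq_zero]
  nlinarith [norm_nonneg (T x - x)]

lemma conj {S : E →ₗ[𝕜] E} (hT : T.IsFirmlyNonexpansive) (hS : S.IsSymmetric)
    (hS1 : ∀ x, ‖S x‖ ≤ ‖x‖) : (S ∘ₗ T ∘ₗ S).IsFirmlyNonexpansive := fun x =>
  calc ‖S (T (S x))‖ ^ 2 ≤ ‖T (S x)‖ ^ 2 := pow_le_pow_left₀ (norm_nonneg _) (hS1 _) 2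
    _ ≤ re ⟪T (S x), S x⟫_𝕜 := hT (S x)
    _ = re ⟪S (T (S x)), x⟫_𝕜 := by rw [hS]

variable {ι : Type*} {s : Finset ι} {ω : ι → ℝ} {R : ι → E →ₗ[𝕜] E}

lemma sum_smul (hω : ∀ i ∈ s, 0 ≤ ω i) (hω1 : ∑ i ∈ s, ω i ≤ 1)
    (hR : ∀ i ∈ s, (R i).IsFirmlyNonexpansive) :
    (∑ i ∈ s, (ω i : 𝕜) • R i).IsFirmlyNonexpansive := by
  intro x
  have hnorm : ‖(∑ i ∈ s, (ω i : 𝕜) • R i) x‖ ≤ ∑ i ∈ s, ω i * ‖R i x‖ := by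
    rw [sum_apply]
    refine (norm_sum_le _ _).trans (Finset.sum_le_sum fun i hi => ?_)
    rw [smul_apply, norm_smul, norm_ofReal, abs_of_nonneg (hω i hi)]
  calc ‖(∑ i ∈ s, (ω i : 𝕜) • R i) x‖ ^ 2 ≤ (∑ i ∈ s, ω i * ‖R i x‖) ^ 2 :=
        pow_le_pow_left₀ (norm_nonneg _) hnorm 2
    _ ≤ (∑ i ∈ s, ω i) * ∑ i ∈ s, ω i * ‖R i x‖ ^ 2 :=
        Finset.sum_sq_le_sum_mul_sum_of_sq_le_mul s hω
          (fun i hi => mul_nonneg (hω i hi) (sq_nonneg _)) fun i _ => le_of_eq (by ring)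
    _ ≤ ∑ i ∈ s, ω i * ‖R i x‖ ^ 2 :=
        mul_le_of_le_one_left (Finset.sum_nonneg fun i hi => mul_nonneg (hω i hi) (sq_nonneg _))
          hω1
    _ ≤ ∑ i ∈ s, ω i * re ⟪R i x, x⟫_𝕜 :=
        Finset.sum_le_sum fun i hi => mul_le_mul_of_nonneg_left (hR i hi x) (hω i hi)
    _ = re ⟪(∑ i ∈ s, (ω i : 𝕜) • R i) x, x⟫_𝕜 := (re_inner_sum_smul_apply s ω R x).symm

lemma apply_eq_of_sum_smul_apply_eq (hω : ∀ i ∈ s, 0 < ω i) (hω1 : ∑ i ∈ s, ω i ≤ 1)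
    (hR : ∀ i ∈ s, (R i).IsFirmlyNonexpansive) {x : E}
    (hx : (∑ i ∈ s, (ω i : 𝕜) • R i) x = x) : ∀ i ∈ s, R i x = x := by
  have hgap : ∀ i ∈ s, 0 ≤ ω i * (‖x‖ ^ 2 - re ⟪R i x, x⟫_𝕜) := fun i hi =>
    mul_nonneg (hω i hi).le (by
      nlinarith [re_inner_le_norm (𝕜 := 𝕜) (R i x) x, (hR i hi).norm_apply_le x, norm_nonneg x])
  have hsum : ∑ i ∈ s, ω i * (‖x‖ ^ 2 - re ⟪R i x, x⟫_𝕜) ≤ 0 := by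
    have h := re_inner_sum_smul_apply s ω R x
    rw [hx, ← norm_sq_eq_re_inner (𝕜 := 𝕜)] at h
    simp only [mul_sub, Finset.sum_sub_distrib, ← Finset.sum_mul, ← h]
    nlinarith [sq_nonneg ‖x‖]
  intro i hi
  have hzero := (Finset.sum_eq_zero_iff_of_nonneg hgap).mp
    (le_antisymm hsum (Finset.sum_nonneg hgap)) i hi
  refine (hR i hi).apply_eq_of_norm_sq_le ?_
  nlinarith [hω i hi]

end IsFirmlyNonexpansive

lemma IsSymmetric.conj {S T : E →ₗ[𝕜] E} (hS : S.IsSymmetric) (hT : T.IsSymmetric) :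
    (S ∘ₗ T ∘ₗ S).IsSymmetric := fun x y => by
  simp only [comp_apply, hS _ y, hT _ (S y), hS x]

lemma IsSymmetric.sum_smul_ofReal {ι : Type*} {s : Finset ι} {ω : ι → ℝ} {R : ι → E →ₗ[𝕜] E}
    (hR : ∀ i ∈ s, (R i).IsSymmetric) : (∑ i ∈ s, (ω i : 𝕜) • R i).IsSymmetric := fun x y => by
  simp only [sum_apply, smul_apply, sum_inner, inner_sum, inner_smul_left, inner_smul_right,
    conj_ofReal]
  exact Finset.sum_congr rfl fun i hi => by rw [hR i hi]

lemma IsSymmetric.inner_pow_apply {T : E →ₗ[𝕜] E} (hT : T.IsSymmetric) (x : E) (k m : ℕ) :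
    ⟪(T ^ k) x, (T ^ m) x⟫_𝕜 = ⟪(T ^ (k + m)) x, x⟫_𝕜 := by
  rw [← hT.pow m, ← Module.End.mul_apply, ← pow_add, add_comm]

lemma IsSymmetric.antitone_re_inner_pow_apply {T : E →ₗ[𝕜] E} (hT : T.IsSymmetric)
    (hTf : T.IsFirmlyNonexpansive) (x : E) : Antitone fun n => re ⟪(T ^ n) x, x⟫_𝕜 := by
  have step : ∀ j, re ⟪(T ^ (j + j + 1)) x, x⟫_𝕜 ≤ re ⟪(T ^ (j + j)) x, x⟫_𝕜 ∧
      re ⟪(T ^ (j + j + 2)) x, x⟫_𝕜 ≤ re ⟪(T ^ (j + j + 1)) x, x⟫_𝕜 := fun j => by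
    set y := (T ^ j) x
    have hodd : ⟪(T ^ (j + j + 1)) x, x⟫_𝕜 = ⟪T y, y⟫_𝕜 := by
      rw [show j + j + 1 = (j + 1) + j by ring, ← hT.inner_pow_apply, pow_succ',
        Module.End.mul_apply]
    have heven : ⟪(T ^ (j + j + 2)) x, x⟫_𝕜 = ⟪T y, T y⟫_𝕜 := by
      rw [show j + j + 2 = (j + 1) + (j + 1) by ring, ← hT.inner_pow_apply, pow_succ' T j,
        Module.End.mul_apply]
    rw [hodd, heven, ← hT.inner_pow_apply, ← norm_sq_eq_re_inner, ← norm_sq_eq_re_inner]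
    exact ⟨by nlinarith [re_inner_le_norm (𝕜 := 𝕜) (T y) y, hTf.norm_apply_le y, norm_nonneg y],
      hTf y⟩
  refine antitone_nat_of_succ_le fun n => ?_
  obtain ⟨j, rfl | rfl⟩ := Nat.even_or_odd' n
  · simpa [two_mul] using (step j).1
  · simpa [two_mul, add_assoc] using (step j).2

theorem IsSymmetric.exists_tendsto_iterate [CompleteSpace E] {T : E →ₗ[𝕜] E}
    (hT : T.IsSymmetric) (hTf : T.IsFirmlyNonexpansive) (e : E) :
    ∃ g, T g = g ∧ Tendsto (fun n => T^[n] e) atTop (𝓝 g) := by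
  have anti := hT.antitone_re_inner_pow_apply hTf e
  have nonneg : ∀ n, 0 ≤ re ⟪(T ^ n) e, e⟫_𝕜 := fun n => by
    refine le_trans ?_ (anti (Nat.le_add_left n n))
    simp only [← hT.inner_pow_apply, ← norm_sq_eq_re_inner]
    positivity
  have hlim := tendsto_atTop_ciInf anti ⟨0, by rintro _ ⟨n, rfl⟩; exact nonneg n⟩
  obtain ⟨g, hg⟩ := cauchySeq_tendsto_of_complete <|
    cauchySeq_of_re_inner_eq hlim fun k m => congrArg re (hT.inner_pow_apply e k m)
  simp only [Module.End.pow_apply] at hg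
  exact ⟨g, isFixedPt_of_tendsto_iterate hg hTf.continuous.continuousAt, hg⟩

lemma IsSymmetricProjection.isFirmlyNonexpansive {P : E →ₗ[𝕜] E}
    (hP : P.IsSymmetricProjection) : P.IsFirmlyNonexpansive := fun x => by
  rw [norm_sq_eq_re_inner (𝕜 := 𝕜), ← hP.isSymmetric, ← Module.End.mul_apply,
    hP.isIdempotentElem.eq]

lemma IsSymmetricProjection.one_sub {P : E →ₗ[𝕜] E} (hP : P.IsSymmetricProjection) :
    (1 - P).IsSymmetricProjection :=
  ⟨hP.isIdempotentElem.one_sub, IsSymmetric.one.sub hP.isSymmetric⟩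

lemma IsSymmetricProjection.isFirmlyNonexpansive_conj {P Q : E →ₗ[𝕜] E}
    (hP : P.IsSymmetricProjection) (hQ : Q.IsSymmetricProjection) :
    (P ∘ₗ Q ∘ₗ P).IsFirmlyNonexpansive :=
  hQ.isFirmlyNonexpansive.conj hP.isSymmetric hP.isFirmlyNonexpansive.norm_apply_le

lemma IsSymmetricProjection.apply_eq_of_conj_apply_eq {P Q : E →ₗ[𝕜] E}
    (hP : P.IsSymmetricProjection) (hQ : Q.IsSymmetricProjection) {x : E}
    (hx : P (Q (P x)) = x) : Q x = x := by
  have hPx : P x = x := by rw [← hx, ← Module.End.mul_apply, hP.isIdempotentElem.eq]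
  rw [hPx] at hx
  refine hQ.isFirmlyNonexpansive.apply_eq_of_norm_sq_le ?_
  have h := hP.isFirmlyNonexpansive.norm_apply_le (Q x)
  rw [hx] at h
  exact (pow_le_pow_left₀ (norm_nonneg x) h 2).trans (hQ.isFirmlyNonexpansive x)

end LinearMap

end InnerProductSpace

section L2

variable {N : ℕ}

lemma coeFn_chiMul {D : Set (EuclideanSpace ℝ (Fin N))} (hD : MeasurableSet D) (f : L2Space N) :
    chiMul hD f =ᵐ[volume] D.indicator f :=
  MemLp.coeFn_toLp _

def chiMulₗ {D : Set (EuclideanSpace ℝ (Fin N))} (hD : MeasurableSet D) :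
    L2Space N →ₗ[ℂ] L2Space N where
  toFun := chiMul hD
  map_add' f g := by
    refine Lp.ext ?_
    filter_upwards [coeFn_chiMul hD (f + g), coeFn_chiMul hD f, coeFn_chiMul hD g,
      Lp.coeFn_add (chiMul hD f) (chiMul hD g), Lp.coeFn_add f g] with x h1 h2 h3 h4 h5
    rw [h1, h4, Pi.add_apply, h2, h3]
    by_cases hx : x ∈ D
    · simp only [Set.indicator_of_mem hx, h5, Pi.add_apply]
    · simp [hx]
  map_smul' c f := by
    refine Lp.ext ?_
    filter_upwards [coeFn_chiMul hD (c • f), coeFn_chiMul hD f,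
      Lp.coeFn_smul c (chiMul hD f), Lp.coeFn_smul c f] with x h1 h2 h3 h4
    rw [h1, RingHom.id_apply, h3, Pi.smul_apply, h2]
    by_cases hx : x ∈ D <;> simp [hx, h4]

@[simp]
lemma chiMulₗ_apply {D : Set (EuclideanSpace ℝ (Fin N))} (hD : MeasurableSet D) (f : L2Space N) :
    chiMulₗ hD f = chiMul hD f :=
  rfl

lemma isSymmetricProjection_chiMulₗ {D : Set (EuclideanSpace ℝ (Fin N))}
    (hD : MeasurableSet D) : (chiMulₗ hD).IsSymmetricProjection where
  isIdempotentElem := LinearMap.ext fun f => by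
    refine Lp.ext ?_
    filter_upwards [coeFn_chiMul hD (chiMul hD f), coeFn_chiMul hD f] with x h1 h2
    change chiMul hD (chiMul hD f) x = chiMul hD f x
    rw [h1]
    by_cases hx : x ∈ D
    · rw [Set.indicator_of_mem hx]
    · rw [Set.indicator_of_notMem hx, h2, Set.indicator_of_notMem hx]
  isSymmetric f g := by
    change inner ℂ (chiMul hD f) g = inner ℂ f (chiMul hD g)
    rw [L2.inner_def, L2.inner_def]
    refine integral_congr_ae ?_
    filter_upwards [coeFn_chiMul hD f, coeFn_chiMul hD g] with x h1 h2
    rw [h1, h2]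
    by_cases hx : x ∈ D <;> simp [hx]

lemma ae_restrict_eq_zero_of_chiMul_eq_zero {D : Set (EuclideanSpace ℝ (Fin N))}
    (hD : MeasurableSet D) {f : L2Space N} (hf : chiMul hD f = 0) :
    f =ᵐ[volume.restrict D] 0 := by
  have hind : D.indicator f =ᵐ[volume] 0 :=
    (coeFn_chiMul hD f).symm.trans (hf ▸ Lp.coeFn_zero _ _ _)
  rw [EventuallyEq, ae_restrict_iff' hD]
  filter_upwards [hind] with x hx hxD
  simpa [hxD] using hx

section ErrorPropagator

variable (K : Submodule ℂ (L2Space N)) [K.HasOrthogonalProjection] {M : ℕ}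
  {D : Fin M → Set (EuclideanSpace ℝ (Fin N))} (hD : ∀ m, MeasurableSet (D m)) (ω : Fin M → ℝ)

def errorPropagator : L2Space N →ₗ[ℂ] L2Space N :=
  ∑ m, (ω m : ℂ) • ((K.starProjection : L2Space N →ₗ[ℂ] L2Space N) ∘ₗ (1 - chiMulₗ (hD m)) ∘ₗ
    (K.starProjection : L2Space N →ₗ[ℂ] L2Space N))

lemma errorPropagator_apply_mem (x : L2Space N) : errorPropagator K hD ω x ∈ K := by
  simp only [errorPropagator, LinearMap.sum_apply, LinearMap.smul_apply, LinearMap.comp_apply]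
  exact K.sum_mem fun _ _ => K.smul_mem _ (K.starProjection_apply_mem _)

lemma Tmulti_mem (hK : IsClosed (K : Set (L2Space N))) (h f : L2Space N) :
    Tmulti K hK hD ω h f ∈ K :=
  K.sum_mem fun _ _ => K.smul_of_tower_mem _ (K.starProjection_apply_mem _)

lemma Tmulti_sub_eq (hK : IsClosed (K : Set (L2Space N))) (hωsum : ∑ m, ω m = 1)
    {h f : L2Space N} (hh : h ∈ K) (hf : f ∈ K) :
    Tmulti K hK hD ω h f - h = errorPropagator K hD ω (f - h) := by
  have hPh : K.starProjection h = h := K.starProjection_eq_self_iff.mpr hh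
  have hPfh : K.starProjection (f - h) = f - h := K.starProjection_eq_self_iff.mpr (K.sub_mem hf hh)
  calc Tmulti K hK hD ω h f - h
      = ∑ m, ω m • (K.starProjection (f + chiMul (hD m) (h - f)) - h) := by
        simp only [smul_sub, Finset.sum_sub_distrib, ← Finset.sum_smul, hωsum, one_smul]
        -- `projOf K hK` is `K.starProjection` for the instance built from `hK`
        rfl
    _ = errorPropagator K hD ω (f - h) := by
        simp only [errorPropagator, LinearMap.sum_apply, LinearMap.smul_apply,
          LinearMap.comp_apply, ContinuousLinearMap.coe_coe, hPfh, LinearMap.sub_apply,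
          Module.End.one_apply, chiMulₗ_apply]
        refine Finset.sum_congr rfl fun m _ => ?_
        have hχ : chiMul (hD m) (f - h) = -chiMul (hD m) (h - f) := by
          rw [← neg_sub h f, ← chiMulₗ_apply, map_neg, chiMulₗ_apply]
        rw [RCLike.real_smul_eq_coe_smul (K := ℂ), hχ,
          show f - h - -chiMul (hD m) (h - f) = f + chiMul (hD m) (h - f) - h by abel, map_sub,
          hPh]
        rfl

lemma sub_eq_iterate_errorPropagator (hK : IsClosed (K : Set (L2Space N)))
    (hωsum : ∑ m, ω m = 1) {h : L2Space N} (hh : h ∈ K) {f : ℕ → L2Space N} (hf0 : f 0 ∈ K)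
    (hfrec : ∀ k, f (k + 1) = Tmulti K hK hD ω h (f k)) (k : ℕ) :
    f k - h = (errorPropagator K hD ω)^[k] (f 0 - h) := by
  have hfK : ∀ k, f k ∈ K := by
    rintro (_ | k)
    · exact hf0
    · exact hfrec k ▸ Tmulti_mem K hD ω hK h (f k)
  induction k with
  | zero => rfl
  | succ k ih =>
    rw [Function.iterate_succ_apply', ← ih, hfrec k, Tmulti_sub_eq K hD ω hK hωsum hh (hfK k)]

variable {ω}

lemma isSymmetric_errorPropagator : (errorPropagator K hD ω).IsSymmetric :=
  LinearMap.IsSymmetric.sum_smul_ofReal fun m _ =>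
    K.starProjection_isSymmetric.conj
      (LinearMap.IsSymmetric.one.sub (isSymmetricProjection_chiMulₗ (hD m)).isSymmetric)

lemma isFirmlyNonexpansive_errorPropagator (hω : ∀ m, 0 ≤ ω m) (hω1 : ∑ m, ω m ≤ 1) :
    (errorPropagator K hD ω).IsFirmlyNonexpansive :=
  LinearMap.IsFirmlyNonexpansive.sum_smul (fun m _ => hω m) hω1 fun m _ =>
    K.isSymmetricProjection_starProjection.isFirmlyNonexpansive_conj
      (isSymmetricProjection_chiMulₗ (hD m)).one_sub

lemma chiMul_eq_zero_of_errorPropagator_apply_eq (hω : ∀ m, 0 < ω m) (hω1 : ∑ m, ω m ≤ 1)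
    {g : L2Space N} (hg : errorPropagator K hD ω g = g) (m : Fin M) : chiMul (hD m) g = 0 := by
  have hfix := LinearMap.IsFirmlyNonexpansive.apply_eq_of_sum_smul_apply_eq (fun m _ => hω m) hω1
    (fun m _ => K.isSymmetricProjection_starProjection.isFirmlyNonexpansive_conj
      (isSymmetricProjection_chiMulₗ (hD m)).one_sub) hg m (Finset.mem_univ m)
  simpa using K.isSymmetricProjection_starProjection.apply_eq_of_conj_apply_eq
    (isSymmetricProjection_chiMulₗ (hD m)).one_sub hfix

end ErrorPropagator

end L2

section Fourier

open Complex

lemma differentiable_integral_cexp_mul {α : Type*} [MeasurableSpace α] {μ : Measure α}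
    {G b : α → ℂ} {C : ℝ} (hG : Integrable G μ) (hb : AEStronglyMeasurable b μ)
    (hbC : ∀ x, G x ≠ 0 → ‖b x‖ ≤ C) :
    Differentiable ℂ fun t => ∫ x, cexp (t * b x) * G x ∂μ := by
  intro t₀
  set β := Real.exp ((‖t₀‖ + 1) * C)
  have hmeas : ∀ t : ℂ, AEStronglyMeasurable (fun x => cexp (t * b x) * G x) μ := fun t =>
    (continuous_exp.comp_aestronglyMeasurable (hb.const_mul t)).mul hG.aestronglyMeasurable
  have hexp : ∀ t ∈ Metric.ball t₀ 1, ∀ x, G x ≠ 0 → ‖cexp (t * b x)‖ ≤ β := fun t ht x hx => by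
    have hnorm : ‖t‖ ≤ ‖t₀‖ + 1 := by
      linarith [norm_sub_norm_le t t₀, (dist_eq_norm t t₀ ▸ Metric.mem_ball.mp ht).le]
    refine (norm_exp_le_exp_norm _).trans (Real.exp_le_exp.mpr ?_)
    rw [norm_mul]
    exact mul_le_mul hnorm (hbC x hx) (norm_nonneg _) (by positivity)
  have key := hasDerivAt_integral_of_dominated_loc_of_deriv_le (μ := μ) (x₀ := t₀)
    (F := fun t x => cexp (t * b x) * G x) (F' := fun t x => b x * (cexp (t * b x) * G x))
    (bound := fun x => C * β * ‖G x‖) (Metric.ball_mem_nhds t₀ one_pos)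
    (Eventually.of_forall hmeas) ?_ (hb.mul (hmeas t₀)) ?_ (hG.norm.const_mul _) ?_
  · exact key.2.differentiableAt
  · refine Integrable.mono' (hG.norm.const_mul β) (hmeas t₀) (Eventually.of_forall fun x => ?_)
    by_cases hx : G x = 0
    · simp [hx]
    · rw [norm_mul]
      exact mul_le_mul_of_nonneg_right (hexp t₀ (Metric.mem_ball_self one_pos) x hx)
        (norm_nonneg _)
  · refine Eventually.of_forall fun x t ht => ?_
    by_cases hx : G x = 0
    · simp [hx]
    · rw [norm_mul, norm_mul, ← mul_assoc]
      exact mul_le_mul_of_nonneg_right (mul_le_mul (hbC x hx) (hexp t ht x hx) (norm_nonneg _)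
        ((norm_nonneg _).trans (hbC x hx))) (norm_nonneg _)
  · refine Eventually.of_forall fun x t _ => ?_
    exact ((hasDerivAt_mul_const (x := t) (b x)).cexp.mul_const (G x)).congr_deriv (by ring)

variable {V : Type*} [NormedAddCommGroup V] [InnerProductSpace ℝ V] [FiniteDimensional ℝ V]
  [MeasurableSpace V] [BorelSpace V]

open scoped RealInnerProductSpace

lemma analyticOnNhd_fourierInv_comp_line {S : Set V} (hS : Bornology.IsBounded S) {F : V → ℂ}
    (hF : Integrable F) (hFS : ∀ k, k ∉ S → F k = 0) (x₀ v : V) :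
    AnalyticOnNhd ℝ (fun s : ℝ => 𝓕⁻ F (x₀ + s • v)) Set.univ := by
  obtain ⟨R, hR⟩ := hS.subset_closedBall 0
  set b : V → ℂ := fun k => ((2 * Real.pi * ⟪k, v⟫ : ℝ) : ℂ) * I
  set G : V → ℂ := fun k => cexp (((2 * Real.pi * ⟪k, x₀⟫ : ℝ) : ℂ) * I) * F k
  have hb : Continuous b := by fun_prop
  have hG : Integrable G := hF.bdd_mul (c := 1) (by fun_prop)
    (Eventually.of_forall fun k => (norm_exp_ofReal_mul_I _).le)
  have hbC : ∀ k, G k ≠ 0 → ‖b k‖ ≤ 2 * Real.pi * (R * ‖v‖) := fun k hk => by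
    have hkS : k ∈ S := by_contra fun h => hk (by simp [G, hFS k h])
    have hk : ‖k‖ ≤ R := by simpa using hR hkS
    calc ‖b k‖ = 2 * Real.pi * |⟪k, v⟫| := by
          simp [b, abs_of_pos Real.pi_pos]
      _ ≤ 2 * Real.pi * (R * ‖v‖) := by
          gcongr
          exact (abs_real_inner_le_norm k v).trans (by gcongr)
  have hψ := differentiable_integral_cexp_mul hG hb.aestronglyMeasurable hbC
  have heq : (fun s : ℝ => 𝓕⁻ F (x₀ + s • v))
      = (fun t => ∫ k, cexp (t * b k) * G k) ∘ Complex.ofRealCLM := funext fun s => by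
    simp only [Function.comp_apply, Complex.ofRealCLM_apply, Real.fourierInv_eq', smul_eq_mul, b,
      G, ← mul_assoc, ← Complex.exp_add]
    congr 1 with k
    rw [inner_add_right, inner_smul_right]
    push_cast
    ring_nf
  rw [heq]
  exact fun s _ => (hψ.analyticAt (s : ℂ)).restrictScalars.comp (Complex.ofRealCLM.analyticAt s)

lemma fourierInv_eq_zero_of_eqOn_zero {S : Set V} (hS : Bornology.IsBounded S) {F : V → ℂ}
    (hF : Integrable F) (hFS : ∀ k, k ∉ S → F k = 0) {U : Set V} (hU : IsOpen U)
    (hUne : U.Nonempty) (h0 : Set.EqOn (𝓕⁻ F) 0 U) : 𝓕⁻ F = 0 := by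
  obtain ⟨x₀, hx₀⟩ := hUne
  funext y
  have hnear : (fun s : ℝ => 𝓕⁻ F (x₀ + s • (y - x₀))) =ᶠ[𝓝 0] 0 := by
    have hline : Tendsto (fun s : ℝ => x₀ + s • (y - x₀)) (𝓝 0) (𝓝 x₀) := by
      simpa using ((continuous_id.smul continuous_const).const_add x₀).tendsto (0 : ℝ)
    filter_upwards [hline (hU.mem_nhds hx₀)] with s hs using h0 hs
  simpa using (analyticOnNhd_fourierInv_comp_line hS hF hFS x₀ (y - x₀))
    |>.eqOn_zero_of_preconnected_of_eventuallyEq_zero isPreconnected_univ (Set.mem_univ 0) hnear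
    (Set.mem_univ 1)

end Fourier

lemma IsBandlimited.eq_zero_of_ae_eq_zero {N : ℕ} {S : Set (EuclideanSpace ℝ (Fin N))}
    (hS : Bornology.IsBounded S) {g : L2Space N} (hg : IsBandlimited S g)
    {U : Set (EuclideanSpace ℝ (Fin N))} (hU : IsOpen U) (hUne : U.Nonempty)
    (h0 : g =ᵐ[volume.restrict U] 0) : g = 0 := by
  obtain ⟨F, hF, hFS, hgF⟩ := hg
  have hcont : Continuous (𝓕⁻ F) :=
    VectorFourier.fourierIntegral_continuous Real.continuous_fourierChar
      (continuous_inner (𝕜 := ℝ)).neg hF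
  have hFU : Set.EqOn (𝓕⁻ F) 0 U := Measure.eqOn_open_of_ae_eq
    ((hgF.filter_mono ae_restrict_le).symm.trans h0) hU hcont.continuousOn continuousOn_const
  refine Lp.ext (hgF.trans ?_)
  rw [fourierInv_eq_zero_of_eqOn_zero hS hF hFS hU hUne hFU]
  exact (Lp.coeFn_zero _ _ _).symm

theorem iterates_tendsto_multi_general (N : ℕ)
    (S : Set (EuclideanSpace ℝ (Fin N))) (hS : IsCompact S)
    (K : Submodule ℂ (L2Space N))
    (hKset : (K : Set (L2Space N)) = {f : L2Space N | IsBandlimited S f})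
    (hK : IsClosed (K : Set (L2Space N)))
    (h : L2Space N) (hh : IsBandlimited S h)
    (M : ℕ) (D : Fin M → Set (EuclideanSpace ℝ (Fin N))) (hD : ∀ m, MeasurableSet (D m))
    (hDint : ∀ m, (interior (D m)).Nonempty)
    (ω : Fin M → ℝ) (hω : ∀ m, ω m ∈ Set.Ioc (0 : ℝ) 1) (hωsum : ∑ m, ω m = 1)
    (f : ℕ → L2Space N) (hf0 : f 0 = ∑ m, projOf K hK (chiMul (hD m) h))
    (hfrec : ∀ k : ℕ, f (k + 1) = Tmulti K hK hD ω h (f k)) :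
    Tendsto (fun k => ‖f k - h‖) atTop (nhds 0) := by
  have : CompleteSpace K := hK.completeSpace_coe
  have mem_K : ∀ x, x ∈ K ↔ IsBandlimited S x := fun x => by rw [← SetLike.mem_coe, hKset]; rfl
  have herr := sub_eq_iterate_errorPropagator K hD ω hK hωsum ((mem_K h).2 hh)
    (hf0 ▸ K.sum_mem fun m _ => K.starProjection_apply_mem _) hfrec
  obtain ⟨g, hfix, hlim⟩ := (isSymmetric_errorPropagator K hD).exists_tendsto_iterate
    (isFirmlyNonexpansive_errorPropagator K hD (fun m => (hω m).1.le) hωsum.le) (f 0 - h)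
  obtain ⟨m⟩ : Nonempty (Fin M) := by
    by_contra hM
    simp [not_nonempty_iff.mp hM] at hωsum
  have hg0 : g = 0 :=
    ((mem_K g).1 (hfix ▸ errorPropagator_apply_mem K hD ω g)).eq_zero_of_ae_eq_zero
      hS.isBounded isOpen_interior (hDint m) <|
      ae_restrict_of_ae_restrict_of_subset interior_subset <|
      ae_restrict_eq_zero_of_chiMul_eq_zero (hD m) <|
      chiMul_eq_zero_of_errorPropagator_apply_eq K hD (fun m => (hω m).1) hωsum.le hfix m
  rw [← funext herr, hg0] at hlim
  exact tendsto_zero_iff_norm_tendsto_zero.mp hlim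

/-- For `h ∈ B_S`, bounded measurable sets `D_1, …, D_M` each with nonempty
interior, and convex weights `ω_m ∈ (0,1]` with `∑ ω_m = 1`, the iterates
`f_0 = ∑ m, P_S(χ_{D_m} h)`, `f_{k+1} = T_h f_k` of
`T_h f = ∑ m, ω_m P_S(f + χ_{D_m}(h − f))` converge strongly to `h`: `‖f_k − h‖ → 0`. -/
theorem iterates_tendsto_multi (N : ℕ) (hN : 1 ≤ N)
    (S : Set (EuclideanSpace ℝ (Fin N))) (hS : IsCompact S)
    (K : Submodule ℂ (L2Space N))
    (hKset : (K : Set (L2Space N)) = {f : L2Space N | IsBandlimited S f})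
    (hK : IsClosed (K : Set (L2Space N)))
    (h : L2Space N) (hh : IsBandlimited S h)
    (M : ℕ) (D : Fin M → Set (EuclideanSpace ℝ (Fin N))) (hD : ∀ m, MeasurableSet (D m))
    (hDbdd : ∀ m, Bornology.IsBounded (D m)) (hDint : ∀ m, (interior (D m)).Nonempty)
    (ω : Fin M → ℝ) (hω : ∀ m, ω m ∈ Set.Ioc (0 : ℝ) 1) (hωsum : ∑ m, ω m = 1)
    (f : ℕ → L2Space N) (hf0 : f 0 = ∑ m, projOf K hK (chiMul (hD m) h))
    (hfrec : ∀ k : ℕ, f (k + 1) = Tmulti K hK hD ω h (f k)) :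
    Tendsto (fun k => ‖f k - h‖) atTop (nhds 0) :=
  iterates_tendsto_multi_general N S hS K hKset hK h hh M D hD hDint ω hω hωsum f hf0 hfrec
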